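/- In misère Nim, a position (finite multiset of pile sizes) is a previous-player win if and only if either (a) all piles have size at most 1 and the number of size-1 piles is odd, or (b) some pile has size at least 2 and the nim-sum of all pile sizes is zero. -/

import Mathlib

instance : Std.Commutative (α := ℕ) (· ^^^ ·) := ⟨Nat.xor_comm⟩
instance : Std.Associative (α := ℕ) (· ^^^ ·) := ⟨Nat.xor_assoc⟩

/-- The nim-sum (bitwise XOR) of a finite multiset of pile sizes. -/
def nimSum (s : Multiset ℕ) : ℕ := Multiset.fold (· ^^^ ·) 0 s

/-- A move in Nim: remove a positive number of counters from a single pile. -/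
def NimMove (s t : Multiset ℕ) : Prop :=
  ∃ a ∈ s, ∃ b < a, t = b ::ₘ s.erase a

mutual
/-- Misère-play previous-player win: the player to move has a move, but every
move leads to a next-player win. -/
inductive MiserePPos : Multiset ℕ → Prop
  | mk (s : Multiset ℕ) : (∃ t, NimMove s t) →
      (∀ t, NimMove s t → MisereNPos t) → MiserePPos s

/-- Misère-play next-player win: either the player to move cannot move (the
opponent made the last move and thus loses), or some move leads to a
previous-player win. -/
inductive MisereNPos : Multiset ℕ → Prop
  | stuck (s : Multiset ℕ) : (∀ t, ¬ NimMove s t) → MisereNPos s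
  | mk (s t : Multiset ℕ) : NimMove s t → MiserePPos t → MisereNPos s
end

/-!
A position is a previous-player win exactly when it satisfies the criterion `MisereCriterion`,
because the criterion has the two properties that characterise P-positions: every move from a
position satisfying it leads to one that does not, and every position that violates it but still
has a move can be moved into it. When some pile has size at least 2 the criterion is the
normal-play condition `nimSum s = 0`, and two such piles let the usual nim-sum balancing move
work; a single large pile is instead reduced to 0 or 1 so as to leave an odd number of 1-piles.
When all piles are at most 1 the game is a parity count.
-/

theorem nimSum_cons (a : ℕ) (s : Multiset ℕ) : nimSum (a ::ₘ s) = a ^^^ nimSum s :=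
  Multiset.fold_cons_left _ _ _ _

theorem nimSum_erase {a : ℕ} {s : Multiset ℕ} (h : a ∈ s) :
    nimSum (s.erase a) = a ^^^ nimSum s := by
  conv_rhs => rw [← Multiset.cons_erase h, nimSum_cons, ← Nat.xor_assoc, Nat.xor_self,
    Nat.zero_xor]

theorem nimSum_cons_erase {a : ℕ} {s : Multiset ℕ} (h : a ∈ s) (b : ℕ) :
    nimSum (b ::ₘ s.erase a) = b ^^^ a ^^^ nimSum s := by
  rw [nimSum_cons, nimSum_erase h, Nat.xor_assoc]

theorem nimSum_lt_two_pow {s : Multiset ℕ} {n : ℕ} (h : ∀ a ∈ s, a < 2 ^ n) :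
    nimSum s < 2 ^ n := by
  induction s using Multiset.induction with
  | empty => exact Nat.two_pow_pos n
  | cons a s ih =>
    rw [Multiset.forall_mem_cons] at h
    rw [nimSum_cons]
    exact Nat.xor_lt_two_pow h.1 (ih h.2)

theorem exists_mem_testBit_of_testBit_nimSum {s : Multiset ℕ} {i : ℕ}
    (h : (nimSum s).testBit i = true) : ∃ x ∈ s, x.testBit i = true := by
  induction s using Multiset.induction with
  | empty => simp [nimSum] at h
  | cons a s ih =>
    rw [nimSum_cons, Nat.testBit_xor] at h
    cases ha : a.testBit i
    · rw [ha, Bool.false_xor] at h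
      obtain ⟨x, hx, hxi⟩ := ih h
      exact ⟨x, Multiset.mem_cons_of_mem hx, hxi⟩
    · exact ⟨a, Multiset.mem_cons_self a s, ha⟩

theorem exists_mem_xor_nimSum_lt {s : Multiset ℕ} (h : nimSum s ≠ 0) :
    ∃ x ∈ s, x ^^^ nimSum s < x := by
  obtain ⟨i, hi, hi_top⟩ := Nat.exists_most_significant_bit h
  -- a pile containing the leading bit of the nim-sum
  obtain ⟨x, hx, hxi⟩ := exists_mem_testBit_of_testBit_nimSum hi
  refine ⟨x, hx, Nat.lt_of_testBit i ?_ hxi fun j hj => ?_⟩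
  · rw [Nat.testBit_xor, hxi, hi]; rfl
  · rw [Nat.testBit_xor, hi_top j hj, Bool.xor_false]

theorem NimMove.sum_lt {s t : Multiset ℕ} (h : NimMove s t) : t.sum < s.sum := by
  obtain ⟨a, ha, b, hb, rfl⟩ := h
  rw [← Multiset.cons_erase ha, Multiset.sum_cons, Multiset.erase_cons_head, Multiset.sum_cons]
  omega

theorem miserePPos_iff_and_misereNPos_iff {Q : Multiset ℕ → Prop}
    (exists_move : ∀ s, Q s → ∃ t, NimMove s t)
    (not_of_move : ∀ s t, Q s → NimMove s t → ¬ Q t)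
    (exists_move_of_not : ∀ s, ¬ Q s → (∃ t, NimMove s t) → ∃ t, NimMove s t ∧ Q t)
    (s : Multiset ℕ) : (MiserePPos s ↔ Q s) ∧ (MisereNPos s ↔ ¬ Q s) := by
  have ih : ∀ t, NimMove s t → (MiserePPos t ↔ Q t) ∧ (MisereNPos t ↔ ¬ Q t) := fun t ht =>
    miserePPos_iff_and_misereNPos_iff exists_move not_of_move exists_move_of_not t
  refine ⟨⟨?_, fun hs => ?_⟩, ⟨?_, fun hs => ?_⟩⟩
  · rintro ⟨_, hex, hN⟩
    by_contra hs
    obtain ⟨t, ht, hQt⟩ := exists_move_of_not s hs hex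
    exact (ih t ht).2.1 (hN t ht) hQt
  · exact .mk s (exists_move s hs) fun t ht => (ih t ht).2.2 (not_of_move s t hs ht)
  · rintro (⟨_, hstuck⟩ | ⟨_, t, ht, hPt⟩) hs
    · obtain ⟨t, ht⟩ := exists_move s hs
      exact hstuck t ht
    · exact not_of_move s t hs ht ((ih t ht).1.1 hPt)
  · by_cases hex : ∃ t, NimMove s t
    · obtain ⟨t, ht, hQt⟩ := exists_move_of_not s hs hex
      exact .mk s t ht ((ih t ht).1.2 hQt)
    · exact .stuck s fun t ht => hex ⟨t, ht⟩
termination_by s.sum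
decreasing_by exact ht.sum_lt

section Criterion

def MisereCriterion (s : Multiset ℕ) : Prop :=
  ((∀ a ∈ s, a ≤ 1) ∧ Odd (s.count 1)) ∨ ((∃ a ∈ s, 2 ≤ a) ∧ nimSum s = 0)

variable {s : Multiset ℕ}

theorem misereCriterion_iff_of_forall_le_one (h : ∀ a ∈ s, a ≤ 1) :
    MisereCriterion s ↔ Odd (s.count 1) := by
  refine ⟨?_, fun hodd => .inl ⟨h, hodd⟩⟩
  rintro (⟨-, hodd⟩ | ⟨⟨a, ha, h2a⟩, -⟩)
  · exact hodd
  · exact absurd (h a ha) (by omega)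

theorem misereCriterion_iff_of_two_le {a : ℕ} (ha : a ∈ s) (h2a : 2 ≤ a) :
    MisereCriterion s ↔ nimSum s = 0 := by
  refine ⟨?_, fun hz => .inr ⟨⟨a, ha, h2a⟩, hz⟩⟩
  rintro (⟨h, -⟩ | ⟨-, hz⟩)
  · exact absurd (h a ha) (by omega)
  · exact hz

theorem exists_two_le_mem_erase_of_nimSum_eq_zero {a : ℕ} (ha : a ∈ s) (h2a : 2 ≤ a)
    (hz : nimSum s = 0) : ∃ c ∈ s.erase a, 2 ≤ c := by
  by_contra! hsmall
  have hlt : nimSum (s.erase a) < 2 ^ 1 := nimSum_lt_two_pow hsmall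
  rw [nimSum_erase ha, hz, Nat.xor_zero] at hlt
  omega

theorem exists_two_le_mem_erase_of_two_le {a c : ℕ} (ha : a ∈ s) (hc : c ∈ s.erase a)
    (h2a : 2 ≤ a) (h2c : 2 ≤ c) (x : ℕ) : ∃ d ∈ s.erase x, 2 ≤ d := by
  by_cases hxa : x = a
  · exact ⟨c, hxa ▸ hc, h2c⟩
  · exact ⟨a, (Multiset.mem_erase_of_ne (Ne.symm hxa)).2 ha, h2a⟩

theorem NimMove.forall_le_one_and_count_one_add_one {t : Multiset ℕ} (hst : NimMove s t)
    (hs : ∀ a ∈ s, a ≤ 1) : (∀ a ∈ t, a ≤ 1) ∧ t.count 1 + 1 = s.count 1 := by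
  obtain ⟨a, ha, b, hba, rfl⟩ := hst
  obtain rfl : a = 1 := by have := hs a ha; omega
  obtain rfl : b = 0 := by omega
  refine ⟨Multiset.forall_mem_cons.2
    ⟨zero_le_one, fun x hx => hs x (Multiset.mem_of_mem_erase hx)⟩, ?_⟩
  rw [Multiset.count_cons, if_neg one_ne_zero, Multiset.count_erase_self, add_zero,
    Nat.sub_add_cancel (Multiset.count_pos.2 ha)]

theorem exists_le_one_odd_count_one_cons (u : Multiset ℕ) :
    ∃ b ≤ 1, Odd ((b ::ₘ u).count 1) := by
  by_cases hu : Odd (u.count 1)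
  · exact ⟨0, zero_le_one, by simpa [Multiset.count_cons] using hu⟩
  · exact ⟨1, le_rfl, by simpa [Multiset.count_cons, Nat.odd_add_one] using hu⟩

theorem MisereCriterion.exists_nimMove (hs : MisereCriterion s) : ∃ t, NimMove s t := by
  obtain ⟨a, ha, hpos⟩ : ∃ a ∈ s, 0 < a := by
    rcases hs with ⟨-, hodd⟩ | ⟨⟨a, ha, h2a⟩, -⟩
    · exact ⟨1, Multiset.count_pos.1 hodd.pos, one_pos⟩
    · exact ⟨a, ha, by omega⟩
  exact ⟨0 ::ₘ s.erase a, a, ha, 0, hpos, rfl⟩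

theorem MisereCriterion.not_of_nimMove {t : Multiset ℕ} (hs : MisereCriterion s)
    (hst : NimMove s t) : ¬ MisereCriterion t := by
  rcases hs with ⟨hsmall, hodd⟩ | ⟨⟨c, hc, h2c⟩, hz⟩
  · obtain ⟨htsmall, hcount⟩ := hst.forall_le_one_and_count_one_add_one hsmall
    rw [misereCriterion_iff_of_forall_le_one htsmall]
    rwa [← hcount, Nat.odd_add_one] at hodd
  · obtain ⟨a, ha, b, hba, rfl⟩ := hst
    obtain ⟨c', hc', h2c'⟩ := exists_two_le_mem_erase_of_nimSum_eq_zero hc h2c hz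
    obtain ⟨d, hd, h2d⟩ := exists_two_le_mem_erase_of_two_le hc hc' h2c h2c' a
    rw [misereCriterion_iff_of_two_le (Multiset.mem_cons_of_mem hd) h2d,
      nimSum_cons_erase ha, hz, Nat.xor_zero]
    exact fun h => hba.ne (Nat.xor_eq_zero_iff.1 h)

theorem MisereCriterion.exists_nimMove_of_not (hs : ¬ MisereCriterion s)
    (hex : ∃ t, NimMove s t) : ∃ t, NimMove s t ∧ MisereCriterion t := by
  by_cases hbig : ∃ a ∈ s, 2 ≤ a
  · obtain ⟨a, ha, h2a⟩ := hbig
    rw [misereCriterion_iff_of_two_le ha h2a] at hs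
    by_cases hsecond : ∃ c ∈ s.erase a, 2 ≤ c
    · obtain ⟨c, hc, h2c⟩ := hsecond
      obtain ⟨x, hx, hlt⟩ := exists_mem_xor_nimSum_lt hs
      obtain ⟨d, hd, h2d⟩ := exists_two_le_mem_erase_of_two_le ha hc h2a h2c x
      refine ⟨_, ⟨x, hx, _, hlt, rfl⟩, ?_⟩
      rw [misereCriterion_iff_of_two_le (Multiset.mem_cons_of_mem hd) h2d,
        nimSum_cons_erase hx, Nat.xor_right_comm x, Nat.xor_self, Nat.zero_xor, Nat.xor_self]
    · push Not at hsecond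
      obtain ⟨b, hb, hodd⟩ := exists_le_one_odd_count_one_cons (s.erase a)
      refine ⟨_, ⟨a, ha, b, by omega, rfl⟩, .inl ⟨?_, hodd⟩⟩
      exact Multiset.forall_mem_cons.2 ⟨hb, fun x hx => by have := hsecond x hx; omega⟩
  · push Not at hbig
    have hsmall : ∀ a ∈ s, a ≤ 1 := fun a ha => by have := hbig a ha; omega
    rw [misereCriterion_iff_of_forall_le_one hsmall] at hs
    obtain ⟨t, hst⟩ := hex
    obtain ⟨htsmall, hcount⟩ := hst.forall_le_one_and_count_one_add_one hsmall
    refine ⟨t, hst, .inl ⟨htsmall, ?_⟩⟩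
    rwa [← hcount, Nat.odd_add_one, not_not] at hs

end Criterion

/-- Solution of misère Nim: a position is a previous-player win iff either all
piles have size at most 1 and the number of size-1 piles is odd, or some pile
has size at least 2 and the nim-sum of the pile sizes is zero. -/
theorem stmt4 (s : Multiset ℕ) :
    MiserePPos s ↔
      ((∀ a ∈ s, a ≤ 1) ∧ Odd (s.count 1)) ∨
      ((∃ a ∈ s, 2 ≤ a) ∧ nimSum s = 0) :=
  (miserePPos_iff_and_misereNPos_iff (fun _ => MisereCriterion.exists_nimMove)
    (fun _ _ => MisereCriterion.not_of_nimMove)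
    (fun _ => MisereCriterion.exists_nimMove_of_not) s).1
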